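/- If ε ≥ 1/2, then for every configuration x the matrix S(x) = J(x) + (1−ε)Q(x) is invertible. More precisely, ‖S(x)v‖₁ ≥ (2ε−1)‖v‖₁ for all v, and for ε = 1/2 one still has S(x)v ≠ 0 for v ≠ 0, because the equality Q(x)v = v is impossible for a vector v supported on overcritical sites. -/

import Mathlib

/-!
Every diagonal entry of `S(x)` is at least `ε`, while the off-diagonal entries of any row or
column of `S(x)` are nonnegative and add up to at most `1 - ε`, because a site has at most `2d`
neighbours. Column dominance gives `‖S v‖₁ ≥ (ε - (1 - ε)) ‖v‖₁`. For injectivity take a site `m`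
where `|v|` is maximal, and among those one with the largest first coordinate. Its row of
`S v = 0` gives `ε |v m| ≤ (1 - ε)/(2d) ∑_{l ~ m} θ_l |v l|`. The right-hand side is strictly
smaller than `(1 - ε) |v m|`: either `m` has fewer than `2d` neighbours, or its neighbour one
step further in the first direction has `|v| < |v m|`.
-/

open Finset

/-- Sites of the lattice cube `[1,L]^d ⊆ ℤ^d`. -/
abbrev Site (d L : ℕ) := Fin d → Fin L

/-- Manhattan metric on the lattice. -/
def dLam {d L : ℕ} (i j : Site d L) : ℕ :=
  ∑ n : Fin d, ((i n : ℤ) - (j n : ℤ)).natAbs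

/-- Heaviside function: `θ a = 1` if `a > 0`, else `0`. -/
noncomputable def theta (a : ℝ) : ℝ := if 0 < a then 1 else 0

/-- The Zhang relaxation map. -/
noncomputable def zhangF (d L : ℕ) (Ec ε : ℝ) (x : Site d L → ℝ) : Site d L → ℝ :=
  fun i => x i - theta (x i - Ec) * (1 - ε) * x i
    + ((1 - ε) / (2 * d)) * ∑ j ∈ univ.filter (fun j => dLam i j = 1), theta (x j - Ec) * x j

/-- 1-norm of a configuration. -/
noncomputable def norm1 {d L : ℕ} (x : Site d L → ℝ) : ℝ := ∑ i, |x i|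

open Matrix

/-- The matrix `Q(x)`. -/
noncomputable def Qmat (d L : ℕ) (Ec : ℝ) (x : Site d L → ℝ) :
    Matrix (Site d L) (Site d L) ℝ :=
  fun k l => if dLam k l = 1 then (1 / (2 * d)) * theta (x l - Ec) else 0

/-- The diagonal matrix `J(x)`. -/
noncomputable def Jmat (d L : ℕ) (Ec ε : ℝ) (x : Site d L → ℝ) :
    Matrix (Site d L) (Site d L) ℝ :=
  Matrix.diagonal (fun l => 1 - (1 - ε) * theta (x l - Ec))

/-- The one-step relaxation matrix `S(x) = J(x) + (1-ε) Q(x)`. -/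
noncomputable def Smat (d L : ℕ) (Ec ε : ℝ) (x : Site d L → ℝ) :
    Matrix (Site d L) (Site d L) ℝ :=
  Jmat d L Ec ε x + (1 - ε) • Qmat d L Ec x

section DiagonalDominance

variable {ι R : Type*} [Fintype ι] [DecidableEq ι] [CommRing R] [LinearOrder R]
  [IsStrictOrderedRing R]

theorem abs_diag_mul_sub_sum_le_abs_mulVec (A : Matrix ι ι R) (v : ι → R) (k : ι) :
    |A k k| * |v k| - ∑ l ∈ univ.erase k, |A k l| * |v l| ≤ |(A *ᵥ v) k| := by
  have hsplit : (A *ᵥ v) k = A k k * v k + ∑ l ∈ univ.erase k, A k l * v l := by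
    rw [mulVec, dotProduct, ← add_sum_erase _ _ (mem_univ k)]
  have htail : |∑ l ∈ univ.erase k, A k l * v l| ≤ ∑ l ∈ univ.erase k, |A k l| * |v l| :=
    (abs_sum_le_sum_abs _ _).trans_eq (sum_congr rfl fun l _ => abs_mul _ _)
  have := abs_sub_abs_le_abs_sub (A k k * v k) (-∑ l ∈ univ.erase k, A k l * v l)
  rw [abs_neg, sub_neg_eq_add, ← hsplit, abs_mul] at this
  linarith

theorem sum_diag_sub_col_mul_abs_le_sum_abs_mulVec (A : Matrix ι ι R) (v : ι → R) :
    ∑ l, (|A l l| - ∑ k ∈ univ.erase l, |A k l|) * |v l| ≤ ∑ k, |(A *ᵥ v) k| := by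
  have hswap : ∑ k, ∑ l ∈ univ.erase k, |A k l| * |v l|
      = ∑ l, ∑ k ∈ univ.erase l, |A k l| * |v l| :=
    sum_comm' fun k l => by simp [ne_comm]
  calc ∑ l, (|A l l| - ∑ k ∈ univ.erase l, |A k l|) * |v l|
      = ∑ k, (|A k k| * |v k| - ∑ l ∈ univ.erase k, |A k l| * |v l|) := by
        simp only [sum_sub_distrib, sub_mul, sum_mul, hswap]
    _ ≤ ∑ k, |(A *ᵥ v) k| :=
        sum_le_sum fun k _ => abs_diag_mul_sub_sum_le_abs_mulVec A v k

theorem abs_diag_mul_le_of_mulVec_eq_zero {A : Matrix ι ι R} {v : ι → R} {m : ι}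
    (h : (A *ᵥ v) m = 0) :
    |A m m| * |v m| ≤ ∑ l ∈ univ.erase m, |A m l| * |v l| := by
  have := abs_diag_mul_sub_sum_le_abs_mulVec A v m
  rw [h, abs_zero] at this
  linarith

end DiagonalDominance

section Lattice

variable {d L : ℕ}

def nbrs (i : Site d L) : Finset (Site d L) := univ.filter fun j => dLam i j = 1

theorem mem_nbrs {i j : Site d L} : j ∈ nbrs i ↔ dLam i j = 1 := by simp [nbrs]

theorem dLam_self (i : Site d L) : dLam i i = 0 := by simp [dLam]

theorem dLam_comm (i j : Site d L) : dLam i j = dLam j i :=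
  sum_congr rfl fun n _ => by omega

theorem eq_of_mem_nbrs {i j : Site d L} (hj : j ∈ nbrs i) {n : Fin d} (hn : j n ≠ i n) :
    (∀ m, m ≠ n → j m = i m) ∧ ((j n : ℤ) = i n + 1 ∨ (j n : ℤ) = i n - 1) := by
  rw [mem_nbrs, dLam, ← add_sum_erase _ _ (mem_univ n)] at hj
  have hn' : ((i n : ℤ) - j n).natAbs ≠ 0 := by
    simpa [sub_eq_zero, Fin.val_inj] using hn.symm
  have hrest : ∀ m ∈ univ.erase n, ((i m : ℤ) - j m).natAbs = 0 :=
    (sum_eq_zero_iff_of_nonneg fun _ _ => Nat.zero_le _).1 (by omega)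
  refine ⟨fun m hm => ?_, by omega⟩
  have := hrest m (mem_erase.2 ⟨hm, mem_univ m⟩)
  exact Fin.ext (by omega)

theorem card_nbrs_filter_le {i : Site d L} (n : Fin d) (s : Finset ℤ)
    (hs : ∀ j ∈ nbrs i, j n ≠ i n → (j n : ℤ) ∈ s) :
    ((nbrs i).filter fun j => j n ≠ i n).card ≤ s.card := by
  refine card_le_card_of_injOn (fun j => (j n : ℤ)) (fun j hj => ?_) fun j hj j' hj' h => ?_
  · obtain ⟨hj, hjn⟩ := mem_filter.1 (mem_coe.1 hj)
    exact hs j hj hjn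
  · replace hj := mem_filter.1 (mem_coe.1 hj)
    replace hj' := mem_filter.1 (mem_coe.1 hj')
    have hjn : j n = j' n := Fin.ext (by simpa using h)
    funext m
    by_cases hm : m = n
    · rw [hm, hjn]
    · rw [(eq_of_mem_nbrs hj.1 hj.2).1 m hm, (eq_of_mem_nbrs hj'.1 hj'.2).1 m hm]

theorem card_nbrs_le_sum (i : Site d L) :
    (nbrs i).card ≤ ∑ n, ((nbrs i).filter fun j => j n ≠ i n).card := by
  refine (card_le_card fun j hj => ?_).trans card_biUnion_le
  have hji : j ≠ i := by
    rintro rfl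
    simp [mem_nbrs, dLam_self] at hj
  obtain ⟨n, hn⟩ := Function.ne_iff.1 hji
  exact mem_biUnion.2 ⟨n, mem_univ n, mem_filter.2 ⟨hj, hn⟩⟩

theorem card_nbrs_filter_le_two (i : Site d L) (n : Fin d) :
    ((nbrs i).filter fun j => j n ≠ i n).card ≤ 2 :=
  (card_nbrs_filter_le n {(i n : ℤ) + 1, (i n : ℤ) - 1} fun j hj hn => by
    simpa using (eq_of_mem_nbrs hj hn).2).trans card_le_two

theorem card_nbrs_le (i : Site d L) : (nbrs i).card ≤ 2 * d := by
  calc (nbrs i).card ≤ ∑ n, ((nbrs i).filter fun j => j n ≠ i n).card := card_nbrs_le_sum i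
    _ ≤ ∑ _n : Fin d, 2 := sum_le_sum fun n _ => card_nbrs_filter_le_two i n
    _ = 2 * d := by simp [mul_comm]

theorem card_nbrs_lt {i : Site d L} (n : Fin d) (h : ∀ j ∈ nbrs i, (j n : ℕ) ≠ i n + 1) :
    (nbrs i).card < 2 * d := by
  have hn : ((nbrs i).filter fun j => j n ≠ i n).card < 2 := by
    refine (card_nbrs_filter_le n {(i n : ℤ) - 1} fun j hj hjn => ?_).trans_lt (by simp)
    have := (eq_of_mem_nbrs hj hjn).2
    have := h j hj
    simp only [mem_singleton]
    omega
  calc (nbrs i).card ≤ ∑ n, ((nbrs i).filter fun j => j n ≠ i n).card := card_nbrs_le_sum i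
    _ < ∑ _n : Fin d, 2 :=
      sum_lt_sum (fun n _ => card_nbrs_filter_le_two i n) ⟨n, mem_univ n, hn⟩
    _ = 2 * d := by simp [mul_comm]

theorem sum_nbrs_lt {i : Site d L} (n : Fin d) {g : Site d L → ℝ} {c : ℝ} (hc : 0 < c)
    (hg : ∀ j ∈ nbrs i, g j ≤ c) (hup : ∀ j ∈ nbrs i, (j n : ℕ) = i n + 1 → g j < c) :
    ∑ j ∈ nbrs i, g j < 2 * d * c := by
  by_cases hex : ∃ j ∈ nbrs i, (j n : ℕ) = i n + 1
  · obtain ⟨j, hj, hjn⟩ := hex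
    calc ∑ j ∈ nbrs i, g j < ∑ _j ∈ nbrs i, c := sum_lt_sum hg ⟨j, hj, hup j hj hjn⟩
      _ = (nbrs i).card * c := by rw [sum_const, nsmul_eq_mul]
      _ ≤ 2 * d * c := by gcongr; exact_mod_cast card_nbrs_le i
  · push Not at hex
    calc ∑ j ∈ nbrs i, g j ≤ ∑ _j ∈ nbrs i, c := sum_le_sum hg
      _ = (nbrs i).card * c := by rw [sum_const, nsmul_eq_mul]
      _ < 2 * d * c := by gcongr; exact_mod_cast card_nbrs_lt n hex

end Lattice

theorem theta_nonneg (a : ℝ) : 0 ≤ theta a := by unfold theta; split_ifs <;> norm_num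

theorem theta_le_one (a : ℝ) : theta a ≤ 1 := by unfold theta; split_ifs <;> norm_num

section Relaxation

variable {d L : ℕ} {Ec ε : ℝ} {x : Site d L → ℝ}

theorem Qmat_apply_self (k : Site d L) : Qmat d L Ec x k k = 0 := by
  simp [Qmat, dLam_self]

theorem Qmat_nonneg (k l : Site d L) : 0 ≤ Qmat d L Ec x k l := by
  unfold Qmat
  split_ifs
  · exact mul_nonneg (by positivity) (theta_nonneg _)
  · rfl

theorem sum_Qmat_mul (m : Site d L) (w : Site d L → ℝ) :
    ∑ l, Qmat d L Ec x m l * w l = (∑ l ∈ nbrs m, theta (x l - Ec) * w l) / (2 * d) := by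
  simp only [Qmat, ite_mul, zero_mul, ← sum_filter, nbrs, sum_div]
  exact sum_congr rfl fun l _ => by ring

theorem sum_Qmat_col_le_one (l : Site d L) : ∑ k, Qmat d L Ec x k l ≤ 1 := by
  have hcol : ∑ k, Qmat d L Ec x k l = (nbrs l).card * theta (x l - Ec) / (2 * d) := by
    simp only [Qmat, ← sum_filter, sum_const, nsmul_eq_mul, dLam_comm _ l]
    rw [show (univ.filter fun k => dLam l k = 1) = nbrs l from rfl]
    ring
  rw [hcol]
  refine div_le_one_of_le₀ ?_ (by positivity)
  calc (nbrs l).card * theta (x l - Ec) ≤ (nbrs l).card * 1 := by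
        gcongr; exact theta_le_one _
    _ ≤ 2 * d := by rw [mul_one]; exact_mod_cast card_nbrs_le l

theorem Smat_apply_self (k : Site d L) :
    Smat d L Ec ε x k k = 1 - (1 - ε) * theta (x k - Ec) := by
  simp [Smat, Jmat, Qmat_apply_self]

theorem Smat_apply_of_ne {k l : Site d L} (h : k ≠ l) :
    Smat d L Ec ε x k l = (1 - ε) * Qmat d L Ec x k l := by
  simp [Smat, Jmat, diagonal_apply_ne _ h]

theorem le_Smat_apply_self (hε1 : ε ≤ 1) (k : Site d L) : ε ≤ Smat d L Ec ε x k k := by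
  rw [Smat_apply_self]
  nlinarith [theta_le_one (x k - Ec)]

theorem sum_erase_abs_Smat_mul (hε1 : ε ≤ 1) (m : Site d L) (w : Site d L → ℝ) :
    ∑ l ∈ univ.erase m, |Smat d L Ec ε x m l| * w l = (1 - ε) * ∑ l, Qmat d L Ec x m l * w l := by
  rw [mul_sum, ← sum_erase univ (a := m) (by simp [Qmat_apply_self])]
  refine sum_congr rfl fun l hl => ?_
  rw [Smat_apply_of_ne (mem_erase.1 hl).1.symm,
    abs_of_nonneg (mul_nonneg (sub_nonneg.2 hε1) (Qmat_nonneg m l)), mul_assoc]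

theorem sum_erase_abs_Smat_col_le (hε1 : ε ≤ 1) (l : Site d L) :
    ∑ k ∈ univ.erase l, |Smat d L Ec ε x k l| ≤ 1 - ε := by
  have hcol : ∑ k ∈ univ.erase l, |Smat d L Ec ε x k l| = (1 - ε) * ∑ k, Qmat d L Ec x k l := by
    rw [mul_sum, ← sum_erase univ (a := l) (by simp [Qmat_apply_self])]
    refine sum_congr rfl fun k hk => ?_
    rw [Smat_apply_of_ne (mem_erase.1 hk).1,
      abs_of_nonneg (mul_nonneg (sub_nonneg.2 hε1) (Qmat_nonneg k l))]
  rw [hcol]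
  exact mul_le_of_le_one_right (sub_nonneg.2 hε1) (sum_Qmat_col_le_one l)

theorem norm1_Smat_mulVec_ge (hε1 : ε ≤ 1) (v : Site d L → ℝ) :
    (2 * ε - 1) * norm1 v ≤ norm1 (Smat d L Ec ε x *ᵥ v) := by
  refine le_trans ?_ (sum_diag_sub_col_mul_abs_le_sum_abs_mulVec _ v)
  rw [norm1, mul_sum]
  refine sum_le_sum fun l _ => mul_le_mul_of_nonneg_right ?_ (abs_nonneg _)
  have := le_Smat_apply_self (Ec := Ec) (x := x) hε1 l
  linarith [le_abs_self (Smat d L Ec ε x l l), sum_erase_abs_Smat_col_le (Ec := Ec) (x := x) hε1 l]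

theorem Smat_mulVec_eq_zero (hd : 0 < d) (hε : 1 / 2 ≤ ε) (hε1 : ε < 1) {v : Site d L → ℝ}
    (hv : Smat d L Ec ε x *ᵥ v = 0) : v = 0 := by
  by_contra hne
  obtain ⟨i, hi⟩ := Function.ne_iff.1 hne
  let n : Fin d := ⟨0, hd⟩
  have : Nonempty (Site d L) := ⟨i⟩
  -- a site of maximal `|v|`, and among those one with the largest `n`-th coordinate
  obtain ⟨m, hm⟩ := Finite.exists_max fun l => toLex (|v l|, (l n : ℕ))
  simp only [Prod.Lex.toLex_le_toLex] at hm
  have hmax : ∀ l, |v l| ≤ |v m| := fun l => (hm l).elim le_of_lt (fun h => h.1.le)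
  have hpos : 0 < |v m| := (abs_pos.2 hi).trans_le (hmax i)
  have hnbrs : ∑ l ∈ nbrs m, theta (x l - Ec) * |v l| < 2 * d * |v m| := by
    refine sum_nbrs_lt n hpos (fun l _ => ?_) (fun l _ hl => ?_)
    · exact (mul_le_of_le_one_left (abs_nonneg _) (theta_le_one _)).trans (hmax l)
    · refine (mul_le_of_le_one_left (abs_nonneg _) (theta_le_one _)).trans_lt ?_
      exact (hm l).resolve_right fun h => by omega
  have hrow := abs_diag_mul_le_of_mulVec_eq_zero (congrFun hv m)
  rw [sum_erase_abs_Smat_mul hε1.le, sum_Qmat_mul] at hrow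
  have hdiag : ε * |v m| ≤ |Smat d L Ec ε x m m| * |v m| :=
    mul_le_mul_of_nonneg_right ((le_Smat_apply_self hε1.le m).trans (le_abs_self _)) hpos.le
  have hd' : (0 : ℝ) < 2 * d := by positivity
  have : (1 - ε) * ((∑ l ∈ nbrs m, theta (x l - Ec) * |v l|) / (2 * d)) < (1 - ε) * |v m| :=
    mul_lt_mul_of_pos_left (by rwa [div_lt_iff₀ hd', mul_comm]) (by linarith)
  nlinarith

end Relaxation

theorem zhang_S_invertible_of_half_le_eps_general
    (d L : ℕ) (hd : 0 < d)
    (Ec ε : ℝ) (hε : (1:ℝ)/2 ≤ ε) (hε1 : ε < 1)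
    (x : Site d L → ℝ) :
    IsUnit (Smat d L Ec ε x) ∧
      (∀ v : Site d L → ℝ,
        (2 * ε - 1) * norm1 v ≤ norm1 ((Smat d L Ec ε x).mulVec v)) ∧
      (∀ v : Site d L → ℝ, v ≠ 0 → (Smat d L Ec ε x).mulVec v ≠ 0) := by
  have hker : ∀ v, Smat d L Ec ε x *ᵥ v = 0 → v = 0 := fun v => Smat_mulVec_eq_zero hd hε hε1
  refine ⟨mulVec_injective_iff_isUnit.1 fun v w h => ?_, norm1_Smat_mulVec_ge hε1.le,
    fun v hv h => hv (hker v h)⟩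
  exact sub_eq_zero.1 (hker _ (by rw [mulVec_sub, h, sub_self]))

theorem zhang_S_invertible_of_half_le_eps
    (d L : ℕ) (hd : 0 < d) (hL : 0 < L)
    (Ec ε : ℝ) (hEc : 0 < Ec) (hε : (1:ℝ)/2 ≤ ε) (hε1 : ε < 1)
    (x : Site d L → ℝ) (hx : ∀ i, 0 ≤ x i) :
    IsUnit (Smat d L Ec ε x) ∧
      (∀ v : Site d L → ℝ,
        (2 * ε - 1) * norm1 v ≤ norm1 ((Smat d L Ec ε x).mulVec v)) ∧
      (∀ v : Site d L → ℝ, v ≠ 0 → (Smat d L Ec ε x).mulVec v ≠ 0) :=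
  zhang_S_invertible_of_half_le_eps_general d L hd Ec ε hε hε1 x
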